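/- arXiv:1504.06441 — 8 statements merged into one kernel-verified Lean document; each statement's English description precedes it below -/
import Mathlib

section
/- If x₁ and x₂ both minimize F, then A x₁ = A x₂ and ‖x₁‖₁ = ‖x₂‖₁; consequently the vector ξ = Aᵀ(y − A x(y)) is the same for every minimizer x(y) of F. -/
/-- Any two minimizers `x₁, x₂` of `F x = ‖x‖₁ + ‖Ax − y‖²/2` satisfy
`A x₁ = A x₂`, `‖x₁‖₁ = ‖x₂‖₁`, and hence determine the same `ξ = Aᵀ(y − A x)`. -/
theorem lasso_invariants (p n : ℕ) (A : Matrix (Fin n) (Fin p) ℝ)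
    (y : Fin n → ℝ) (F : (Fin p → ℝ) → ℝ)
    (hF : ∀ x, F x = (∑ i, |x i|) + (∑ j, (A.mulVec x j - y j) ^ 2) / 2)
    (x₁ x₂ : Fin p → ℝ) (h₁ : ∀ z, F x₁ ≤ F z) (h₂ : ∀ z, F x₂ ≤ F z) :
    A.mulVec x₁ = A.mulVec x₂ ∧ (∑ i, |x₁ i|) = (∑ i, |x₂ i|) ∧
      A.transpose.mulVec (y - A.mulVec x₁) = A.transpose.mulVec (y - A.mulVec x₂) := by
  have hFe : F x₁ = F x₂ := le_antisymm (h₁ x₂) (h₂ x₁)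
  set a := A.mulVec x₁ with ha
  set b := A.mulVec x₂ with hb
  have hS : (0:ℝ) ≤ ∑ j, (a j - b j) ^ 2 :=
    Finset.sum_nonneg fun j _ => sq_nonneg _
  have hab : a = b := by
    set z : Fin p → ℝ := fun i => (x₁ i + x₂ i) / 2 with hzdef
    have hz : ∀ j, A.mulVec z j = (a j + b j) / 2 := by
      intro j
      simp only [Matrix.mulVec, dotProduct, ha, hb, hzdef]
      rw [← Finset.sum_add_distrib, Finset.sum_div]
      refine Finset.sum_congr rfl fun i _ => by ring
    have h1 : ∑ i, |z i| ≤ (∑ i, |x₁ i| + ∑ i, |x₂ i|) / 2 := by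
      rw [← Finset.sum_add_distrib, Finset.sum_div]
      refine Finset.sum_le_sum fun i _ => ?_
      have h0 : |z i| = |x₁ i + x₂ i| / 2 := by
        simp only [hzdef]
        rw [abs_div]
        norm_num
      rw [h0]
      have := abs_add_le (x₁ i) (x₂ i)
      linarith
    have h2 : ∑ j, (A.mulVec z j - y j) ^ 2 =
        (∑ j, (a j - y j) ^ 2 + ∑ j, (b j - y j) ^ 2) / 2
          - (∑ j, (a j - b j) ^ 2) / 4 := by
      rw [← Finset.sum_add_distrib, Finset.sum_div, Finset.sum_div,
        ← Finset.sum_sub_distrib]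
      refine Finset.sum_congr rfl fun j _ => ?_
      rw [hz j]
      ring
    have hFz := h₁ z
    rw [hF x₁, hF z, h2] at hFz
    have hFe' := hFe
    rw [hF x₁, hF x₂] at hFe'
    have hSle : ∑ j, (a j - b j) ^ 2 ≤ 0 := by linarith
    have hS0 : ∑ j, (a j - b j) ^ 2 = 0 := le_antisymm hSle hS
    funext j
    have := (Finset.sum_eq_zero_iff_of_nonneg
      (fun j _ => sq_nonneg (a j - b j))).mp hS0 j (Finset.mem_univ j)
    have := sq_eq_zero_iff.mp this
    linarith
  refine ⟨hab, ?_, ?_⟩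
  · have hFe' := hFe
    rw [hF x₁, hF x₂, ← ha, ← hb, hab] at hFe'
    linarith
  · rw [hab]
end

section
/- The set of minimizers of F (the Lasso set) is nonempty, convex and compact. -/
/-- The set of minimizers of `F x = ‖x‖₁ + ‖Ax − y‖²/2` (the Lasso set)
is nonempty, convex and compact. -/
theorem lasso_set_nonempty_convex_compact (p n : ℕ) (A : Matrix (Fin n) (Fin p) ℝ)
    (y : Fin n → ℝ) (F : (Fin p → ℝ) → ℝ)
    (hF : ∀ x, F x = (∑ i, |x i|) + (∑ j, (A.mulVec x j - y j) ^ 2) / 2) :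
    {x : Fin p → ℝ | ∀ z, F x ≤ F z}.Nonempty ∧
      Convex ℝ {x : Fin p → ℝ | ∀ z, F x ≤ F z} ∧
      IsCompact {x : Fin p → ℝ | ∀ z, F x ≤ F z} := by
  set S := {x : Fin p → ℝ | ∀ z, F x ≤ F z} with hS
  -- continuity of F
  have hFc : Continuous F := by
    have hEq : F = fun x => (∑ i, |x i|) + (∑ j, ((∑ k, A j k * x k) - y j) ^ 2) / 2 := by
      funext x; rw [hF x]; simp [Matrix.mulVec, dotProduct]
    rw [hEq]
    apply Continuous.add
    · exact continuous_finset_sum _ fun i _ => (continuous_apply i).abs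
    · apply Continuous.div_const
      exact continuous_finset_sum _ fun j _ =>
        ((continuous_finset_sum _ fun k _ => (continuous_const.mul (continuous_apply k))).sub
          continuous_const).pow 2
  -- lower bound
  have hlow : ∀ x, (∑ i, |x i|) ≤ F x := by
    intro x
    rw [hF x]
    have : 0 ≤ (∑ j, (A.mulVec x j - y j) ^ 2) / 2 := by positivity
    linarith
  have hF0 : 0 ≤ F 0 := by
    have := hlow 0
    simpa using this
  -- compact sublevel set
  set K := {x : Fin p → ℝ | (∑ i, |x i|) ≤ F 0} with hK
  have hKclosed : IsClosed K :=
    isClosed_le (continuous_finset_sum _ fun i _ => (continuous_apply i).abs) continuous_const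
  have hKsub : K ⊆ Metric.closedBall 0 (F 0) := by
    intro x hx
    rw [Metric.mem_closedBall, dist_pi_le_iff hF0]
    intro i
    have h1 : |x i| ≤ ∑ j, |x j| :=
      Finset.single_le_sum (f := fun j => |x j|) (fun j _ => abs_nonneg _) (Finset.mem_univ i)
    simpa [Real.dist_eq] using h1.trans hx
  have hKcompact : IsCompact K :=
    (Metric.isCompact_of_isClosed_isBounded hKclosed
      ((Metric.isBounded_closedBall).subset hKsub))
  have h0K : (0 : Fin p → ℝ) ∈ K := by simp [hK, hF0]
  -- existence of minimizer
  obtain ⟨x₀, hx₀K, hmin⟩ := hKcompact.exists_isMinOn ⟨0, h0K⟩ hFc.continuousOn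
  have hx₀ : x₀ ∈ S := by
    intro z
    by_cases hz : (∑ i, |z i|) ≤ F 0
    · exact hmin hz
    · have h1 : F x₀ ≤ F 0 := hmin h0K
      have h2 : F 0 < ∑ i, |z i| := not_le.mp hz
      exact h1.trans (h2.le.trans (hlow z))
  -- convexity of F
  have hFconv : ∀ (x₁ x₂ : Fin p → ℝ) (a b : ℝ), 0 ≤ a → 0 ≤ b → a + b = 1 →
      F (a • x₁ + b • x₂) ≤ a * F x₁ + b * F x₂ := by
    intro x₁ x₂ a b ha hb hab
    rw [hF, hF, hF]
    have hmv : ∀ j, A.mulVec (a • x₁ + b • x₂) j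
        = a * A.mulVec x₁ j + b * A.mulVec x₂ j := by
      intro j
      simp [Matrix.mulVec_add, Matrix.mulVec_smul]
    have h1 : (∑ i, |(a • x₁ + b • x₂) i|) ≤ a * (∑ i, |x₁ i|) + b * (∑ i, |x₂ i|) := by
      rw [Finset.mul_sum, Finset.mul_sum, ← Finset.sum_add_distrib]
      apply Finset.sum_le_sum
      intro i _
      have : |a * x₁ i + b * x₂ i| ≤ |a * x₁ i| + |b * x₂ i| := abs_add_le _ _
      simpa [abs_mul, abs_of_nonneg ha, abs_of_nonneg hb] using this
    have h2 : (∑ j, (A.mulVec (a • x₁ + b • x₂) j - y j) ^ 2)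
        ≤ a * (∑ j, (A.mulVec x₁ j - y j) ^ 2) + b * (∑ j, (A.mulVec x₂ j - y j) ^ 2) := by
      rw [Finset.mul_sum, Finset.mul_sum, ← Finset.sum_add_distrib]
      apply Finset.sum_le_sum
      intro j _
      rw [hmv j]
      set u := A.mulVec x₁ j
      set v := A.mulVec x₂ j
      have hb' : b = 1 - a := by linarith
      have key : a * (u - y j) ^ 2 + b * (v - y j) ^ 2 - (a * u + b * v - y j) ^ 2
          = a * b * (u - v) ^ 2 := by rw [hb']; ring
      nlinarith [mul_nonneg (mul_nonneg ha hb) (sq_nonneg (u - v))]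
    linarith
  -- convexity of S
  have hSconv : Convex ℝ S := by
    intro x₁ h₁ x₂ h₂ a b ha hb hab
    intro z
    calc F (a • x₁ + b • x₂) ≤ a * F x₁ + b * F x₂ := hFconv x₁ x₂ a b ha hb hab
      _ ≤ a * F z + b * F z := by
          gcongr
          exacts [h₁ z, h₂ z]
      _ = F z := by rw [← add_mul, hab, one_mul]
  -- compactness of S
  have hSclosed : IsClosed S := by
    have : S = ⋂ z, {x : Fin p → ℝ | F x ≤ F z} := by
      ext x; simp [hS, Set.mem_iInter]
    rw [this]
    exact isClosed_iInter fun z => isClosed_le hFc continuous_const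
  have hSsubK : S ⊆ K := by
    intro x hx
    exact (hlow x).trans (hx 0)
  exact ⟨⟨x₀, hx₀⟩, hSconv, hKcompact.of_isClosed_subset hSclosed hSsubK⟩
end

section
/- If x(y) minimizes F and i ∈ {1,…,p} satisfies |ξᵢ| < 1, then xᵢ(y) = 0; in other words, the support {i : xᵢ(y) ≠ 0} of every minimizer is contained in ∂I = {i : |ξᵢ| = 1}. -/
/-- If `|ξ i| < 1` (where `ξ = Aᵀ(y − A x₀)` for a minimizer `x₀` of `F`), then the
`i`-th component of every minimizer of `F` vanishes: the support of every minimizer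
is contained in `∂I = {i : |ξ i| = 1}`. -/
theorem lasso_support_in_boundary (p n : ℕ) (A : Matrix (Fin n) (Fin p) ℝ)
    (y : Fin n → ℝ) (F : (Fin p → ℝ) → ℝ)
    (hF : ∀ x, F x = (∑ i, |x i|) + (∑ j, (A.mulVec x j - y j) ^ 2) / 2)
    (x₀ : Fin p → ℝ) (hx₀ : ∀ z, F x₀ ≤ F z)
    (ξ : Fin p → ℝ) (hξ : ξ = A.transpose.mulVec (y - A.mulVec x₀))
    (x₁ : Fin p → ℝ) (hx₁ : ∀ z, F x₁ ≤ F z) :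
    ∀ i, |ξ i| < 1 → x₁ i = 0 := by
  intro i hi
  by_contra hne
  have hFeq : F x₀ = F x₁ := le_antisymm (hx₀ x₁) (hx₁ x₀)
  -- Step 1: A x₀ = A x₁ (strict convexity of quadratic part)
  have huv : ∀ j, A.mulVec x₀ j = A.mulVec x₁ j := by
    set m : Fin p → ℝ := fun k => (x₀ k + x₁ k) / 2 with hmdef
    have hAm : ∀ j, A.mulVec m j = (A.mulVec x₀ j + A.mulVec x₁ j) / 2 := by
      intro j
      simp only [Matrix.mulVec, dotProduct, hmdef]
      rw [← Finset.sum_add_distrib, Finset.sum_div]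
      exact Finset.sum_congr rfl fun k _ => by ring
    have habs : ∑ k, |m k| ≤ ((∑ k, |x₀ k|) + ∑ k, |x₁ k|) / 2 := by
      have hr : (∑ k, (|x₀ k| + |x₁ k|) / 2) = ((∑ k, |x₀ k|) + ∑ k, |x₁ k|) / 2 := by
        rw [← Finset.sum_div, Finset.sum_add_distrib]
      rw [← hr]
      refine Finset.sum_le_sum fun k _ => ?_
      have h := abs_add_le (x₀ k) (x₁ k)
      have hm : |m k| = |x₀ k + x₁ k| / 2 := by
        rw [hmdef]; simp only; rw [abs_div]; norm_num
      rw [hm]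
      linarith
    have hquad : ∑ j, (A.mulVec m j - y j) ^ 2 =
        (∑ j, (A.mulVec x₀ j - y j) ^ 2) / 2 + (∑ j, (A.mulVec x₁ j - y j) ^ 2) / 2
          - (∑ j, (A.mulVec x₀ j - A.mulVec x₁ j) ^ 2) / 4 := by
      rw [Finset.sum_div, Finset.sum_div, Finset.sum_div, ← Finset.sum_add_distrib,
        ← Finset.sum_sub_distrib]
      refine Finset.sum_congr rfl fun j _ => ?_
      rw [hAm j]; ring
    have h1 : F x₀ ≤ F m := hx₀ m
    rw [hF m, hF x₀] at h1
    have h2 : F x₀ = F x₁ := hFeq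
    rw [hF x₀, hF x₁] at h2
    have hQ : ∑ j, (A.mulVec x₀ j - A.mulVec x₁ j) ^ 2 ≤ 0 := by
      rw [hquad] at h1
      linarith
    have hQ0 : ∑ j, (A.mulVec x₀ j - A.mulVec x₁ j) ^ 2 = 0 :=
      le_antisymm hQ (Finset.sum_nonneg fun j _ => sq_nonneg _)
    intro j
    have := (Finset.sum_eq_zero_iff_of_nonneg (fun j _ => sq_nonneg
      (A.mulVec x₀ j - A.mulVec x₁ j))).mp hQ0 j (Finset.mem_univ j)
    have := pow_eq_zero_iff (n := 2) (by norm_num) |>.mp this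
    linarith
  -- Step 2: express ξ i via x₁
  have hξi : ξ i = ∑ j, A j i * (y j - A.mulVec x₁ j) := by
    have hAeq : A.mulVec x₀ = A.mulVec x₁ := funext huv
    rw [hξ, hAeq]
    simp only [Matrix.mulVec, dotProduct, Matrix.transpose_apply, Pi.sub_apply]
  have hcross : ∑ j, A j i * (A.mulVec x₁ j - y j) = -ξ i := by
    rw [hξi, ← Finset.sum_neg_distrib]
    exact Finset.sum_congr rfl fun j _ => by ring
  -- Step 3: perturbation
  set s : ℝ := if 0 < x₁ i then 1 else -1 with hsdef
  have hs2 : s ^ 2 = 1 := by by_cases h : 0 < x₁ i <;> simp [hsdef, h]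
  have hsabs : |s| = 1 := by by_cases h : 0 < x₁ i <;> simp [hsdef, h]
  have hsx : s * ξ i ≤ |ξ i| := by
    calc s * ξ i ≤ |s * ξ i| := le_abs_self _
    _ = |ξ i| := by rw [abs_mul, hsabs, one_mul]
  have h1s : 0 < 1 - s * ξ i := by
    have := abs_nonneg (ξ i); linarith
  set c : ℝ := ∑ j, (A j i) ^ 2 with hcdef
  have hc : 0 ≤ c := Finset.sum_nonneg fun j _ => sq_nonneg _
  set t : ℝ := min |x₁ i| ((1 - s * ξ i) / (c + 1)) with htdef
  have ht0 : 0 < t := lt_min (abs_pos.mpr hne) (div_pos h1s (by linarith))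
  have hta : t ≤ |x₁ i| := min_le_left _ _
  have htc : t * c / 2 < 1 - s * ξ i := by
    have h2 : t * (c + 1) ≤ 1 - s * ξ i :=
      (le_div_iff₀ (by linarith)).mp (min_le_right _ _)
    nlinarith [mul_nonneg ht0.le hc]
  set z : Fin p → ℝ := fun k => x₁ k - t * s * (if k = i then 1 else 0) with hzdef
  have hzi : z i = x₁ i - t * s := by simp [hzdef]
  have habs_z : ∑ k, |z k| = (∑ k, |x₁ k|) - t := by
    have h1 : ∑ k, (|z k| - |x₁ k|) = |z i| - |x₁ i| := by
      refine Finset.sum_eq_single i (fun k _ hk => by simp [hzdef, hk]) (by simp)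
    have h2 : |z i| = |x₁ i| - t := by
      rw [hzi]
      rcases lt_or_gt_of_ne hne with h | h
      · have hs : s = -1 := by simp [hsdef, not_lt.mpr h.le, h.not_gt]
        rw [hs]
        have ha : |x₁ i| = -(x₁ i) := abs_of_neg h
        rw [abs_of_nonpos (by rw [ha] at hta; linarith)]
        linarith
      · have hs : s = 1 := by simp [hsdef, h]
        rw [hs]
        have ha : |x₁ i| = x₁ i := abs_of_pos h
        rw [abs_of_nonneg (by rw [ha] at hta; linarith)]
        linarith
    rw [Finset.sum_sub_distrib] at h1
    linarith
  have hAz : ∀ j, A.mulVec z j = A.mulVec x₁ j - t * s * A j i := by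
    intro j
    simp only [Matrix.mulVec, dotProduct]
    have e : ∀ k, A j k * z k = A j k * x₁ k - t * s * (if k = i then A j k else 0) := by
      intro k
      by_cases h : k = i <;> simp [hzdef, h] <;> ring
    rw [Finset.sum_congr rfl fun k _ => e k, Finset.sum_sub_distrib, ← Finset.mul_sum,
      Finset.sum_ite_eq' Finset.univ i (fun k => A j k), if_pos (Finset.mem_univ i)]
  have hquad : ∑ j, (A.mulVec z j - y j) ^ 2 =
      (∑ j, (A.mulVec x₁ j - y j) ^ 2) + 2 * t * s * ξ i + t ^ 2 * s ^ 2 * c := by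
    have e : ∀ j, (A.mulVec z j - y j) ^ 2 = (A.mulVec x₁ j - y j) ^ 2
        - 2 * t * s * (A j i * (A.mulVec x₁ j - y j)) + t ^ 2 * s ^ 2 * (A j i) ^ 2 := by
      intro j; rw [hAz j]; ring
    rw [Finset.sum_congr rfl fun j _ => e j, Finset.sum_add_distrib, Finset.sum_sub_distrib,
      ← Finset.mul_sum, hcross, ← Finset.mul_sum, ← hcdef]
    ring
  have hlt : F z < F x₁ := by
    rw [hF z, hF x₁, habs_z, hquad, hs2]
    nlinarith [mul_lt_mul_of_pos_left htc ht0]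
  exact absurd (hx₁ z) (not_le.mpr hlt)
end

section
/- If the submatrix A_{∂I} of A consisting of the columns indexed by ∂I has linearly independent columns (equivalently, A_{∂I}ᵀA_{∂I} is invertible), then F has a unique minimizer. -/
lemma lasso_quad_expand (p n : ℕ) (A : Matrix (Fin n) (Fin p) ℝ) (y : Fin n → ℝ)
    (x d : Fin p → ℝ) (t : ℝ) :
    ∑ j, (A.mulVec (x + t • d) j - y j) ^ 2 =
      (∑ j, (A.mulVec x j - y j) ^ 2)
        + 2 * t * ∑ j, (A.mulVec x j - y j) * A.mulVec d j
        + t ^ 2 * ∑ j, (A.mulVec d j) ^ 2 := by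
  have h : ∀ j, (A.mulVec (x + t • d) j - y j) ^ 2 =
      (A.mulVec x j - y j) ^ 2 + 2 * t * ((A.mulVec x j - y j) * A.mulVec d j)
        + t ^ 2 * (A.mulVec d j) ^ 2 := by
    intro j
    have : A.mulVec (x + t • d) j = A.mulVec x j + t * A.mulVec d j := by
      simp [Matrix.mulVec_add, Matrix.mulVec_smul]
    rw [this]; ring
  simp only [h, Finset.sum_add_distrib, Finset.mul_sum]

lemma lasso_opt (p n : ℕ) (A : Matrix (Fin n) (Fin p) ℝ) (y : Fin n → ℝ)
    (F : (Fin p → ℝ) → ℝ)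
    (hF : ∀ x, F x = (∑ i, |x i|) + (∑ j, (A.mulVec x j - y j) ^ 2) / 2)
    (x : Fin p → ℝ) (hx : ∀ z, F x ≤ F z) (i : Fin p) (hi : x i ≠ 0) :
    |∑ j, A j i * (y j - A.mulVec x j)| = 1 := by
  classical
  set ξi : ℝ := ∑ j, A j i * (y j - A.mulVec x j) with hξi
  set c : ℝ := ∑ j, (A j i) ^ 2 with hc
  have hc0 : 0 ≤ c := Finset.sum_nonneg fun j _ => sq_nonneg _
  set s : ℝ := if 0 < x i then 1 else -1 with hs
  set e : Fin p → ℝ := Pi.single i 1 with he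
  have hsingle : ∀ j, A.mulVec e j = A j i := by
    intro j
    rw [he]
    simp [Matrix.mulVec, dotProduct, Pi.single_apply, mul_ite,
      Finset.sum_ite_eq, Finset.sum_ite_eq']
  have key : ∀ t : ℝ, |t| < |x i| → 0 ≤ t * s - t * ξi + t ^ 2 * c / 2 := by
    intro t ht
    have habs : |x i + t| = |x i| + t * s := by
      rcases lt_or_gt_of_ne hi with h | h
      · have hs' : s = -1 := by simp [hs, not_lt.2 h.le, h.not_gt]
        have hxa : |x i| = -(x i) := abs_of_neg h
        have : x i + t < 0 := by
          have := (abs_lt.mp (hxa ▸ ht)).2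
          linarith
        rw [abs_of_neg this, hxa, hs']; ring
      · have hs' : s = 1 := by simp [hs, h]
        have hxa : |x i| = x i := abs_of_pos h
        have : 0 < x i + t := by
          have := (abs_lt.mp (hxa ▸ ht)).1
          linarith
        rw [abs_of_pos this, hxa, hs']; ring
    have hF1 := hx (x + t • e)
    rw [hF x, hF _] at hF1
    have hQ := lasso_quad_expand p n A y x e t
    have hS : ∑ j, (A.mulVec x j - y j) * A.mulVec e j = -ξi := by
      rw [hξi, ← Finset.sum_neg_distrib]
      exact Finset.sum_congr rfl fun j _ => by rw [hsingle]; ring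
    have hC : ∑ j, (A.mulVec e j) ^ 2 = c := by
      rw [hc]; exact Finset.sum_congr rfl fun j _ => by rw [hsingle]
    rw [hS, hC] at hQ
    have hL : ∑ k, |(x + t • e) k|
        = (∑ k, |x k|) - |x i| + |x i + t| := by
      rw [← Finset.sum_erase_add _ _ (Finset.mem_univ i)]
      have h2 : ∑ k, |x k| = (∑ k ∈ Finset.univ.erase i, |x k|) + |x i| :=
        (Finset.sum_erase_add _ _ (Finset.mem_univ i)).symm
      rw [h2]
      have : ∀ k ∈ Finset.univ.erase i,
          |(x + t • e) k| = |x k| := by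
        intro k hk
        have hk' : k ≠ i := Finset.ne_of_mem_erase hk
        simp [he, Pi.single_apply, hk']
      rw [Finset.sum_congr rfl this]
      simp [he, Pi.single_apply]
    rw [hL, hQ, habs] at hF1
    linarith
  have hs1 : |s| = 1 := by rcases le_or_gt (x i) 0 with h | h <;> simp [hs, h.not_gt, h]
  suffices hξs : ξi = s by rw [hξs, hs1]
  by_contra hne
  set δ : ℝ := ξi - s with hδ
  have hδ0 : δ ≠ 0 := sub_ne_zero.mpr hne
  have hδ2 : 0 < δ ^ 2 := by positivity
  have hx0 : 0 < |x i| := abs_pos.mpr hi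
  set m : ℝ := min (|x i| / (2 * |δ|)) (1 / (c + 1)) with hm
  have hm0 : 0 < m := by
    apply lt_min
    · positivity
    · positivity
  have hm1 : m ≤ 1 / (c + 1) := min_le_right _ _
  have hcp : (0:ℝ) < c + 1 := by linarith
  have hm2 : m * (c + 1) ≤ 1 := by
    have h := mul_le_mul_of_nonneg_right hm1 (le_of_lt hcp)
    rwa [one_div, inv_mul_cancel₀ (ne_of_gt hcp)] at h
  have htlt : |δ * m| < |x i| := by
    rw [abs_mul, abs_of_pos hm0]
    have : |δ| * m ≤ |δ| * (|x i| / (2 * |δ|)) :=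
      mul_le_mul_of_nonneg_left (min_le_left _ _) (abs_nonneg _)
    have hd : 0 < |δ| := abs_pos.mpr hδ0
    have : |δ| * (|x i| / (2 * |δ|)) = |x i| / 2 := by
      field_simp
    linarith [mul_le_mul_of_nonneg_left (min_le_left (|x i| / (2 * |δ|)) (1 / (c+1))) (abs_nonneg δ), this]
  have hk := key (δ * m) htlt
  have hts : (δ * m) * s - (δ * m) * ξi = -(δ ^ 2 * m) := by
    rw [hδ]; ring
  rw [hts] at hk
  nlinarith [mul_pos hδ2 hm0, mul_le_mul_of_nonneg_left hm2 (mul_pos hδ2 hm0).le,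
    mul_nonneg (mul_nonneg hδ2.le (mul_pos hm0 hm0).le) hc0]

/-- If the columns of `A` indexed by `∂I = {i : |ξ i| = 1}` are linearly independent
(equivalently, `A_{∂I}ᵀ A_{∂I}` is invertible), then `F` has a unique minimizer. -/
theorem lasso_unique_minimizer (p n : ℕ) (A : Matrix (Fin n) (Fin p) ℝ)
    (y : Fin n → ℝ) (F : (Fin p → ℝ) → ℝ)
    (hF : ∀ x, F x = (∑ i, |x i|) + (∑ j, (A.mulVec x j - y j) ^ 2) / 2)
    (x₀ : Fin p → ℝ) (hx₀ : ∀ z, F x₀ ≤ F z)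
    (ξ : Fin p → ℝ) (hξ : ξ = A.transpose.mulVec (y - A.mulVec x₀))
    (hind : LinearIndependent ℝ
      (fun i : {i : Fin p // |ξ i| = 1} => (fun j => A j i.1 : Fin n → ℝ))) :
    ∃! x : Fin p → ℝ, ∀ z, F x ≤ F z := by
  classical
  refine ⟨x₀, hx₀, fun z hz => ?_⟩
  -- Step 1: A z = A x₀
  set d : Fin p → ℝ := z - x₀ with hd
  have hzd : z = x₀ + (1:ℝ) • d := by simp [hd]
  have hQ1 := lasso_quad_expand p n A y x₀ d 1
  have hQh := lasso_quad_expand p n A y x₀ d (1/2)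
  set W : ℝ := ∑ j, (A.mulVec d j) ^ 2 with hW
  have hW0 : 0 ≤ W := Finset.sum_nonneg fun j _ => sq_nonneg _
  have hFz : F z = F x₀ := le_antisymm (hz x₀) (hx₀ z)
  -- L part of midpoint
  have hLm : ∑ i, |(x₀ + (1/2 : ℝ) • d) i| ≤ ((∑ i, |x₀ i|) + ∑ i, |z i|) / 2 := by
    rw [← Finset.sum_add_distrib, Finset.sum_div]
    apply Finset.sum_le_sum
    intro i _
    have : (x₀ + (1/2 : ℝ) • d) i = (x₀ i + z i) / 2 := by
      simp [hd]; ring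
    rw [this]
    calc |(x₀ i + z i) / 2| = |x₀ i + z i| / 2 := by
          rw [abs_div]; norm_num
      _ ≤ (|x₀ i| + |z i|) / 2 := by linarith [abs_add_le (x₀ i) (z i)]
  have hFm := hx₀ (x₀ + (1/2 : ℝ) • d)
  rw [hF (x₀ + (1/2:ℝ) • d)] at hFm
  have hFzx : F z = (∑ i, |z i|) + (∑ j, (A.mulVec z j - y j) ^ 2) / 2 := hF z
  have hFxx : F x₀ = (∑ i, |x₀ i|) + (∑ j, (A.mulVec x₀ j - y j) ^ 2) / 2 := hF x₀
  have hQz : ∑ j, (A.mulVec z j - y j) ^ 2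
      = (∑ j, (A.mulVec x₀ j - y j) ^ 2)
        + 2 * 1 * ∑ j, (A.mulVec x₀ j - y j) * A.mulVec d j + 1 ^ 2 * W := by
    rw [← hQ1, ← hzd]
  have hWzero : W = 0 := by nlinarith [hQh, hFm, hLm, hFz, hFzx, hFxx, hQz]
  have hsum0 : ∑ j, (A.mulVec d j) ^ 2 = 0 := by rw [← hW]; exact hWzero
  have hAd : ∀ j, A.mulVec d j = 0 := by
    intro j
    have h := (Finset.sum_eq_zero_iff_of_nonneg
      (fun k _ => sq_nonneg (A.mulVec d k))).mp hsum0 j (Finset.mem_univ j)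
    exact pow_eq_zero_iff (two_ne_zero) |>.mp h
  have hAz : A.mulVec z = A.mulVec x₀ := by
    funext j
    have h := hAd j
    rw [hd, Matrix.mulVec_sub] at h
    have : A.mulVec z j - A.mulVec x₀ j = 0 := h
    linarith
  -- ξ in sum form
  have hξ' : ∀ i, ξ i = ∑ j, A j i * (y j - A.mulVec x₀ j) := by
    intro i
    rw [hξ]
    simp [Matrix.mulVec, dotProduct, Matrix.transpose_apply]
  -- optimality: nonzero coordinates of any minimizer lie in ∂I
  have hx₀opt : ∀ i, x₀ i ≠ 0 → |ξ i| = 1 := by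
    intro i hi
    rw [hξ' i]
    exact lasso_opt p n A y F hF x₀ hx₀ i hi
  have hzopt : ∀ i, z i ≠ 0 → |ξ i| = 1 := by
    intro i hi
    have h := lasso_opt p n A y F hF z hz i hi
    rw [hξ' i]
    rw [← hAz]
    exact h
  have hdzero : ∀ i, |ξ i| ≠ 1 → d i = 0 := by
    intro i hi
    have h1 : z i = 0 := by by_contra h; exact hi (hzopt i h)
    have h2 : x₀ i = 0 := by by_contra h; exact hi (hx₀opt i h)
    simp [hd, h1, h2]
  -- linear independence
  have hsum : ∑ i : {i : Fin p // |ξ i| = 1}, d i.1 • (fun j => A j i.1 : Fin n → ℝ) = 0 := by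
    funext j
    rw [Finset.sum_apply]
    have h1 : ∑ i : {i : Fin p // |ξ i| = 1}, (d i.1 • (fun j => A j i.1 : Fin n → ℝ)) j
        = ∑ i : {i : Fin p // |ξ i| = 1}, A j i.1 * d i.1 := by
      apply Finset.sum_congr rfl
      intro i _
      simp [mul_comm]
    rw [h1]
    have h2 : ∑ i : {i : Fin p // |ξ i| = 1}, A j i.1 * d i.1
        = ∑ i ∈ Finset.univ.filter (fun i => |ξ i| = 1), A j i * d i := by
      rw [Finset.sum_subtype (p := fun i => |ξ i| = 1)
        (Finset.univ.filter (fun i => |ξ i| = 1))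
        (by intro x; simp) (fun i => A j i * d i)]
    have h3 : ∑ i ∈ Finset.univ.filter (fun i => |ξ i| = 1), A j i * d i
        = ∑ i, A j i * d i := by
      apply Finset.sum_filter_of_ne
      intro i _ hne
      by_contra hc
      exact hne (by rw [hdzero i hc, mul_zero])
    have h4 : ∑ i, A j i * d i = A.mulVec d j := rfl
    rw [h2, h3, h4, hAd j]
    simp
  have hall := Fintype.linearIndependent_iff.mp hind (fun i => d i.1) hsum
  have hdall : ∀ i, d i = 0 := by
    intro i
    by_cases hi : |ξ i| = 1
    · exact hall ⟨i, hi⟩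
    · exact hdzero i hi
  funext i
  have := hdall i
  rw [hd] at this
  have : z i - x₀ i = 0 := this
  linarith
end

section
/- Let S be the (nonempty, compact) set of minimizers of F. For every δ > 0, the ratio (∫_{{x ∈ ℝ^p : dist(x,S) ≥ δ}} exp(−2βF(x)) dx) / (∫_{ℝ^p} exp(−2βF(x)) dx) tends to 0 as β → +∞; equivalently, the distance ‖X_β − π(X_β)‖ from X_β to the Lasso set converges to 0 in probability as β → +∞, where π denotes the metric projection onto S. -/
/-!
Laplace's method in its crudest form. Let `m = min F`. The set `{δ ≤ dist(·, S)}` is closed and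
contains no minimizer, so by coercivity `F ≥ b` on it for some `b > m`. Pick `m < a < b`: the open
sublevel set `{F < a}` has positive finite measure and `exp(-βF) ≥ exp(-βa)` there, while on
`{δ ≤ dist(·, S)}` we have `exp(-βF) ≤ exp(-(β-1)b) exp(-F)`. Hence the ratio is
`O(exp(-(b - a)β))`. For the Lasso objective, `F(x) ≥ ‖x‖₁ ≥ ‖x‖` gives both coercivity and the
integrability of `exp(-F)`.
-/

open MeasureTheory Filter Topology Real Metric Set
open scoped ENNReal

section Laplace

variable {α : Type*} [MeasurableSpace α] {μ : Measure α} {f : α → ℝ}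

lemma exp_neg_mul_le_of_le {β c t : ℝ} (hβ : 1 ≤ β) (hct : c ≤ t) :
    exp (-β * t) ≤ exp (-(β - 1) * c) * exp (-t) := by
  rw [← exp_add]
  exact exp_le_exp.2 (by nlinarith)

lemma integrable_exp_neg_mul_of_le {c β : ℝ} (hf : AEMeasurable f μ)
    (hint : Integrable (fun x => exp (-f x)) μ) (hc : ∀ x, c ≤ f x) (hβ : 1 ≤ β) :
    Integrable (fun x => exp (-β * f x)) μ :=
  (hint.const_mul _).mono' (hf.const_mul _).exp.aestronglyMeasurable <| .of_forall fun x => by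
    rw [norm_of_nonneg (exp_pos _).le]
    exact exp_neg_mul_le_of_le hβ (hc x)

lemma setIntegral_exp_neg_mul_le {T : Set α} {b β : ℝ} (hT : MeasurableSet T)
    (hint : Integrable (fun x => exp (-f x)) μ) (hfT : ∀ x ∈ T, b ≤ f x) (hβ : 1 ≤ β) :
    ∫ x in T, exp (-β * f x) ∂μ ≤ exp (-(β - 1) * b) * ∫ x, exp (-f x) ∂μ :=
  calc ∫ x in T, exp (-β * f x) ∂μ
      ≤ ∫ x in T, exp (-(β - 1) * b) * exp (-f x) ∂μ :=
        integral_mono_of_nonneg (.of_forall fun x => (exp_pos _).le)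
          (hint.const_mul _).integrableOn
          ((ae_restrict_iff' hT).2 (.of_forall fun x hx => exp_neg_mul_le_of_le hβ (hfT x hx)))
    _ ≤ ∫ x, exp (-(β - 1) * b) * exp (-f x) ∂μ :=
        setIntegral_le_integral (hint.const_mul _) (.of_forall fun x => by positivity)
    _ = exp (-(β - 1) * b) * ∫ x, exp (-f x) ∂μ := integral_const_mul _ _

lemma exp_neg_mul_mul_measureReal_le_integral {U : Set α} {a β : ℝ} (hU : MeasurableSet U)
    (hμU : μ U ≠ ∞) (hfU : ∀ x ∈ U, f x ≤ a) (hβ : 0 ≤ β)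
    (hint : Integrable (fun x => exp (-β * f x)) μ) :
    exp (-β * a) * μ.real U ≤ ∫ x, exp (-β * f x) ∂μ :=
  (setIntegral_ge_of_const_le_real hU hμU
      (fun x hx => exp_le_exp.2 (by nlinarith [hfU x hx])) hint.integrableOn).trans
    (setIntegral_le_integral hint (.of_forall fun x => (exp_pos _).le))

theorem tendsto_setIntegral_exp_neg_mul_div_integral {T U : Set α} {a b c : ℝ}
    (hf : AEMeasurable f μ) (hint : Integrable (fun x => exp (-f x)) μ) (hc : ∀ x, c ≤ f x)
    (hU : MeasurableSet U) (hμU : μ U ≠ ∞) (hμU₀ : μ U ≠ 0) (hfU : ∀ x ∈ U, f x ≤ a)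
    (hT : MeasurableSet T) (hfT : ∀ x ∈ T, b ≤ f x) (hab : a < b) :
    Tendsto (fun β => (∫ x in T, exp (-β * f x) ∂μ) / ∫ x, exp (-β * f x) ∂μ) atTop (𝓝 0) := by
  set I := ∫ x, exp (-f x) ∂μ
  have hV : 0 < μ.real U := ENNReal.toReal_pos hμU₀ hμU
  have hbound : ∀ β, 1 ≤ β → (∫ x in T, exp (-β * f x) ∂μ) / ∫ x, exp (-β * f x) ∂μ ≤
      exp b * I / μ.real U * exp (-((b - a) * β)) := by
    intro β hβ
    have hsplit : exp (-(β - 1) * b) = exp b * exp (-((b - a) * β)) * exp (-β * a) := by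
      rw [← exp_add, ← exp_add]; congr 1; ring
    calc _ ≤ exp (-(β - 1) * b) * I / (exp (-β * a) * μ.real U) :=
          div_le_div₀ (by positivity) (setIntegral_exp_neg_mul_le hT hint hfT hβ) (by positivity)
            (exp_neg_mul_mul_measureReal_le_integral hU hμU hfU (by linarith)
              (integrable_exp_neg_mul_of_le hf hint hc hβ))
      _ = exp b * I / μ.real U * exp (-((b - a) * β)) := by
          rw [hsplit]; field_simp
  have hdecay : Tendsto (fun β => exp b * I / μ.real U * exp (-((b - a) * β))) atTop (𝓝 0) := by
    simpa using (tendsto_exp_neg_atTop_nhds_zero.comp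
      (tendsto_id.const_mul_atTop (sub_pos.2 hab))).const_mul (exp b * I / μ.real U)
  refine tendsto_of_tendsto_of_tendsto_of_le_of_le' tendsto_const_nhds hdecay
    (.of_forall fun β => ?_) ((eventually_ge_atTop 1).mono hbound)
  exact div_nonneg (setIntegral_nonneg hT fun x _ => (exp_pos _).le)
    (integral_nonneg fun x => (exp_pos _).le)

end Laplace

section Coercive

variable {E : Type*} {F : E → ℝ}

lemma Continuous.exists_lt_forall_mem_le_of_tendsto_cocompact [TopologicalSpace E]
    (hF : Continuous F) (hFc : Tendsto F (cocompact E) atTop) {T : Set E} (hT : IsClosed T)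
    {m : ℝ} (hm : ∀ x ∈ T, m < F x) : ∃ b, m < b ∧ ∀ x ∈ T, b ≤ F x := by
  rcases T.eq_empty_or_nonempty with rfl | ⟨t, ht⟩
  · exact ⟨m + 1, by linarith, by simp⟩
  obtain ⟨x₁, hx₁, hmin⟩ := hF.continuousOn.exists_isMinOn' hT ht
    ((hFc.eventually (eventually_ge_atTop (F t))).filter_mono inf_le_left)
  exact ⟨F x₁, hm x₁ hx₁, hmin⟩

lemma measure_setOf_lt_ne_top_of_tendsto_cocompact [TopologicalSpace E] [MeasurableSpace E]
    (μ : Measure E) [IsFiniteMeasureOnCompacts μ] (hFc : Tendsto F (cocompact E) atTop)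
    (a : ℝ) : μ {x | F x < a} ≠ ∞ := by
  obtain ⟨K, hK, hKF⟩ := mem_cocompact.1 (hFc.eventually (eventually_ge_atTop a))
  refine ((measure_mono fun x (hx : F x < a) => ?_).trans_lt hK.measure_lt_top).ne
  by_contra hxK
  exact hx.not_ge (hKF hxK)

theorem tendsto_setIntegral_infDist_argmin_ge_div_integral [PseudoMetricSpace E] [Nonempty E]
    [MeasurableSpace E] [OpensMeasurableSpace E] {μ : Measure E} [μ.IsOpenPosMeasure]
    [IsFiniteMeasureOnCompacts μ] (hF : Continuous F) (hFc : Tendsto F (cocompact E) atTop)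
    (hint : Integrable (fun x => exp (-F x)) μ) {δ : ℝ} (hδ : 0 < δ) :
    Tendsto (fun β => (∫ x in {x | δ ≤ infDist x {x | ∀ z, F x ≤ F z}}, exp (-β * F x) ∂μ) /
      ∫ x, exp (-β * F x) ∂μ) atTop (𝓝 0) := by
  obtain ⟨x₀, hx₀⟩ := hF.exists_forall_le hFc
  set T := {x | δ ≤ infDist x {x | ∀ z, F x ≤ F z}}
  have hT : IsClosed T := isClosed_le continuous_const (continuous_infDist_pt _)
  have hTF : ∀ x ∈ T, F x₀ < F x := fun x hx => by
    by_contra! hx₀x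
    have hxS : x ∈ {x | ∀ z, F x ≤ F z} := fun z => hx₀x.trans (hx₀ z)
    exact hδ.not_ge (infDist_zero_of_mem hxS ▸ hx)
  obtain ⟨b, hb, hFb⟩ := hF.exists_lt_forall_mem_le_of_tendsto_cocompact hFc hT hTF
  have hU : IsOpen {x | F x < (F x₀ + b) / 2} := isOpen_lt hF continuous_const
  have hx₀U : x₀ ∈ {x | F x < (F x₀ + b) / 2} := by show F x₀ < _; linarith
  exact tendsto_setIntegral_exp_neg_mul_div_integral hF.aemeasurable hint hx₀ hU.measurableSet
    (measure_setOf_lt_ne_top_of_tendsto_cocompact μ hFc _) (hU.measure_ne_zero μ ⟨x₀, hx₀U⟩)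
    (fun _ hx => le_of_lt hx) hT.measurableSet hFb (by linarith)

end Coercive

lemma integrable_exp_neg_norm {E : Type*} [NormedAddCommGroup E] [NormedSpace ℝ E]
    [FiniteDimensional ℝ E] [MeasurableSpace E] [BorelSpace E] (μ : Measure E)
    [μ.IsAddHaarMeasure] : Integrable (fun x : E => exp (-‖x‖)) μ := by
  rcases subsingleton_or_nontrivial E with _ | _
  · have : (fun x : E => exp (-‖x‖)) = fun _ => 1 := by
      ext x; simp [Subsingleton.elim x 0]
    rw [this]
    exact integrable_const _
  · rw [integrable_fun_norm_addHaar μ (f := fun t => exp (-t))]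
    refine (integrableOn_rpow_mul_exp_neg_rpow (p := 1) (s := (Module.finrank ℝ E - 1 : ℕ))
      (neg_one_lt_zero.trans_le (Nat.cast_nonneg _)) one_pos).congr_fun (fun y _ => ?_)
      measurableSet_Ioi
    simp [rpow_natCast]

section Lasso

variable {ι κ : Type*} [Fintype ι] [Fintype κ]

lemma EuclideanSpace.norm_le_sum_abs (x : EuclideanSpace ℝ ι) : ‖x‖ ≤ ∑ i, |x i| := by
  rw [EuclideanSpace.norm_eq, sqrt_le_left (Finset.sum_nonneg fun i _ => abs_nonneg _)]
  simpa only [norm_eq_abs, sq_abs] using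
    Finset.sum_sq_le_sq_sum_of_nonneg (s := Finset.univ) fun i _ => abs_nonneg (x i)

noncomputable def lassoObjective (A : Matrix κ ι ℝ) (y : κ → ℝ) (x : EuclideanSpace ℝ ι) : ℝ :=
  (∑ i, |x i|) + (∑ j, ((∑ i, A j i * x i) - y j) ^ 2) / 2

variable (A : Matrix κ ι ℝ) (y : κ → ℝ)

lemma continuous_lassoObjective : Continuous (lassoObjective A y) := by
  unfold lassoObjective; fun_prop

lemma norm_le_lassoObjective (x : EuclideanSpace ℝ ι) : ‖x‖ ≤ lassoObjective A y x :=
  (EuclideanSpace.norm_le_sum_abs x).trans (le_add_of_nonneg_right (by positivity))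

lemma tendsto_lassoObjective_cocompact :
    Tendsto (lassoObjective A y) (cocompact (EuclideanSpace ℝ ι)) atTop :=
  tendsto_atTop_mono (norm_le_lassoObjective A y) tendsto_norm_cocompact_atTop

lemma integrable_exp_neg_lassoObjective :
    Integrable (fun x => exp (-lassoObjective A y x)) :=
  (integrable_exp_neg_norm volume).mono'
    (continuous_exp.comp (continuous_lassoObjective A y).neg).aestronglyMeasurable
    (.of_forall fun x => by
      rw [norm_of_nonneg (exp_pos _).le]
      exact exp_le_exp.2 (neg_le_neg (norm_le_lassoObjective A y x)))

end Lasso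

/-- Concentration of the posterior on the Lasso set: for every `δ > 0`, the mass that
the (unnormalized) posterior `exp(−2βF)` puts at Euclidean distance `≥ δ` from the set
`S` of minimizers of `F`, relative to the total mass `Z_β`, tends to `0` as `β → +∞`;
i.e. `‖X_β − π(X_β)‖ → 0` in probability. -/
theorem posterior_concentrates_on_lasso_set (p n : ℕ)
    (A : Matrix (Fin n) (Fin p) ℝ) (y : Fin n → ℝ)
    (F : EuclideanSpace ℝ (Fin p) → ℝ)
    (hF : ∀ x, F x = (∑ i, |x i|) + (∑ j, ((∑ i, A j i * x i) - y j) ^ 2) / 2)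
    (S : Set (EuclideanSpace ℝ (Fin p))) (hS : S = {x | ∀ z, F x ≤ F z})
    (δ : ℝ) (hδ : 0 < δ) :
    Filter.Tendsto (fun β : ℝ =>
        (∫ x in {x : EuclideanSpace ℝ (Fin p) | δ ≤ Metric.infDist x S},
          Real.exp (-2 * β * F x)) /
        (∫ x : EuclideanSpace ℝ (Fin p), Real.exp (-2 * β * F x)))
      Filter.atTop (nhds 0) := by
  obtain rfl : F = lassoObjective A y := funext hF
  subst hS
  have h := (tendsto_setIntegral_infDist_argmin_ge_div_integral (μ := volume)
    (continuous_lassoObjective A y) (tendsto_lassoObjective_cocompact A y)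
    (integrable_exp_neg_lassoObjective A y) hδ).comp (tendsto_id.const_mul_atTop two_pos)
  simpa only [Function.comp_def, id, neg_mul] using h
end

section
/- Let x(y) be any minimizer of F, m = F(x(y)), and ξ = Aᵀ(y − A x(y)). Then for every x ∈ ℝ^p, F(x) − m = ‖x‖₁ − ⟨x, ξ⟩ + ‖A(x − x(y))‖²/2 (equivalently, F(x) − m = Σᵢ |xᵢ|(1 − sgn(xᵢ)ξᵢ) + ‖A(x − x(y))‖²/2). -/
private lemma small_abs_zero (a b : ℝ)
    (h : ∀ ε : ℝ, 0 < ε → ε ≤ 1 → 0 ≤ ε * a + ε ^ 2 * b ∧ 0 ≤ -ε * a + ε ^ 2 * b) :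
    a = 0 := by
  have hb : 0 ≤ b := by
    have := h 1 one_pos le_rfl
    nlinarith [this.1, this.2]
  by_contra ha
  have habs : 0 < |a| := abs_pos.mpr ha
  set ε : ℝ := min 1 (|a| / (2 * (b + 1))) with hε
  have hε0 : 0 < ε := lt_min one_pos (by positivity)
  have hε1 : ε ≤ 1 := min_le_left _ _
  have hεle : ε ≤ |a| / (2 * (b + 1)) := min_le_right _ _
  have h2 := h ε hε0 hε1
  have key : |a| ≤ ε * b := by
    rcases abs_cases a with ⟨h1, _⟩ | ⟨h1, _⟩
    · nlinarith [h2.2]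
    · nlinarith [h2.1]
  have : ε * b ≤ (|a| / (2 * (b + 1))) * b := by
    apply mul_le_mul_of_nonneg_right hεle hb
  have hlt : (|a| / (2 * (b + 1))) * b < |a| := by
    rw [div_mul_eq_mul_div, div_lt_iff₀ (by positivity)]
    nlinarith
  linarith

private lemma adjoint_sum (p n : ℕ) (A : Matrix (Fin n) (Fin p) ℝ)
    (v : Fin p → ℝ) (w : Fin n → ℝ) :
    ∑ i, v i * A.transpose.mulVec w i = ∑ j, A.mulVec v j * w j := by
  simp only [Matrix.mulVec, dotProduct, Matrix.transpose_apply, Finset.mul_sum,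
    Finset.sum_mul]
  rw [Finset.sum_comm]
  exact Finset.sum_congr rfl fun j _ => Finset.sum_congr rfl fun i _ => by ring

/-- For any minimizer `x₀` of `F` with `m = F(x₀)` and `ξ = Aᵀ(y − A x₀)`,
`F(x) − m = ‖x‖₁ − ⟨x, ξ⟩ + ‖A(x − x₀)‖²/2` for every `x`. -/
theorem F_minus_min_formula (p n : ℕ) (A : Matrix (Fin n) (Fin p) ℝ)
    (y : Fin n → ℝ) (F : (Fin p → ℝ) → ℝ)
    (hF : ∀ x, F x = (∑ i, |x i|) + (∑ j, (A.mulVec x j - y j) ^ 2) / 2)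
    (x₀ : Fin p → ℝ) (hx₀ : ∀ z, F x₀ ≤ F z)
    (ξ : Fin p → ℝ) (hξ : ξ = A.transpose.mulVec (y - A.mulVec x₀)) :
    ∀ x, F x - F x₀ =
      (∑ i, |x i|) - (∑ i, x i * ξ i) + (∑ j, (A.mulVec (x - x₀) j) ^ 2) / 2 := by
  -- key bilinear identity
  have hkey : ∀ v : Fin p → ℝ,
      ∑ i, v i * ξ i = ∑ j, A.mulVec v j * (y j - A.mulVec x₀ j) := by
    intro v
    rw [hξ, adjoint_sum]
    exact Finset.sum_congr rfl fun j _ => by simp [Pi.sub_apply]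
  -- optimality identity for dilations of x₀
  have hopt : ∀ h : ℝ, -1 ≤ h →
      F ((1 + h) • x₀) - F x₀ =
        h * ((∑ i, |x₀ i|) - ∑ i, x₀ i * ξ i)
          + h ^ 2 * ((∑ j, (A.mulVec x₀ j) ^ 2) / 2) := by
    intro h hh
    rw [hF, hF, hkey x₀, Matrix.mulVec_smul]
    have habs : ∀ i : Fin p, |((1 + h) • x₀) i| = |x₀ i| + h * |x₀ i| := by
      intro i
      simp only [Pi.smul_apply, smul_eq_mul, abs_mul, abs_of_nonneg (by linarith : (0:ℝ) ≤ 1 + h)]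
      ring
    have hsq : ∀ j : Fin n, (((1 + h) • A.mulVec x₀) j - y j) ^ 2 =
        (A.mulVec x₀ j - y j) ^ 2
          - 2 * h * (A.mulVec x₀ j * (y j - A.mulVec x₀ j))
          + h ^ 2 * (A.mulVec x₀ j) ^ 2 := by
      intro j
      simp only [Pi.smul_apply, smul_eq_mul]
      ring
    simp only [habs, hsq]
    rw [Finset.sum_add_distrib, Finset.sum_add_distrib, Finset.sum_sub_distrib,
      ← Finset.mul_sum, ← Finset.mul_sum, ← Finset.mul_sum]
    ring
  -- the optimality condition: ‖x₀‖₁ = ⟨x₀, ξ⟩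
  have hs : (∑ i, |x₀ i|) - (∑ i, x₀ i * ξ i) = 0 := by
    apply small_abs_zero _ ((∑ j, (A.mulVec x₀ j) ^ 2) / 2)
    intro ε hε0 hε1
    constructor
    · have h1 := hx₀ ((1 + ε) • x₀)
      have h2 := hopt ε (by linarith)
      linarith
    · have h1 := hx₀ ((1 + -ε) • x₀)
      have h2 := hopt (-ε) (by linarith)
      have : (-ε) ^ 2 = ε ^ 2 := by ring
      rw [this] at h2
      linarith
  -- main computation
  intro x
  rw [hF, hF, hkey x]
  have hx₀eq : (∑ i, |x₀ i|) = ∑ j, A.mulVec x₀ j * (y j - A.mulVec x₀ j) := by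
    have := hkey x₀
    linarith
  rw [hx₀eq]
  have hsub : ∀ j : Fin n, A.mulVec (x - x₀) j = A.mulVec x j - A.mulVec x₀ j := by
    intro j; rw [Matrix.mulVec_sub]; simp [Pi.sub_apply]
  simp only [hsub]
  have expand : ∀ j : Fin n, (A.mulVec x j - y j) ^ 2 =
      (A.mulVec x₀ j - y j) ^ 2
        + (A.mulVec x j - A.mulVec x₀ j) ^ 2
        - 2 * (A.mulVec x j * (y j - A.mulVec x₀ j))
        + 2 * (A.mulVec x₀ j * (y j - A.mulVec x₀ j)) := by
    intro j; ring
  simp only [expand]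
  rw [Finset.sum_add_distrib, Finset.sum_sub_distrib, Finset.sum_add_distrib,
    ← Finset.mul_sum, ← Finset.mul_sum]
  ring
end

section
/- For every α > 0, ε > 0 and x ∈ ℝ, the function z ↦ h_ε(z) + (z − x)²/(2α) has a unique minimizer, equal to x + α if x ≤ −α − ε, to εx/(α + ε) if |x| ≤ α + ε, and to x − α if x ≥ α + ε. -/
/-!
The Huber function is the Fenchel conjugate of `s ↦ ε s² / 2` on `[-1, 1]`: every line
`z ↦ s z - ε s² / 2` with `|s| ≤ 1` lies below it, and the one whose slope is the derivative
`clamp (m / ε)` touches it at `m`. The candidate minimizer `m` satisfies the optimality condition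
`(x - m) / α = clamp (m / ε)`, so adding that supporting line to the exact expansion of
`(z - x)² / (2α)` around `m` gives `f m + (z - m)² / (2α) ≤ f z`, which forces uniqueness.
-/

noncomputable section

namespace Huber

variable {ε : ℝ}

def huber (ε t : ℝ) : ℝ := if ε ≤ |t| then |t| - ε / 2 else t ^ 2 / (2 * ε)

def huberDeriv (ε t : ℝ) : ℝ := max (-1) (min 1 (t / ε))

def huberProx (α ε x : ℝ) : ℝ :=
  if x ≤ -(α + ε) then x + α else if α + ε ≤ x then x - α else ε * x / (α + ε)

theorem huberDeriv_of_le (hε : 0 < ε) {t : ℝ} (ht : ε ≤ t) : huberDeriv ε t = 1 := by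
  have : 1 ≤ t / ε := (one_le_div hε).2 ht
  simp [huberDeriv, min_eq_left this]

theorem huberDeriv_of_le_neg (hε : 0 < ε) {t : ℝ} (ht : t ≤ -ε) : huberDeriv ε t = -1 := by
  have : t / ε ≤ -1 := (div_le_iff₀ hε).2 (by linarith)
  rw [huberDeriv, min_eq_right (by linarith), max_eq_left this]

theorem huberDeriv_of_abs_le (hε : 0 < ε) {t : ℝ} (ht : |t| ≤ ε) : huberDeriv ε t = t / ε := by
  have h := abs_le.1 ((abs_div t ε).trans_le (by rwa [abs_of_pos hε, div_le_one hε]))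
  simp [huberDeriv, min_eq_right h.2, max_eq_right h.1]

theorem abs_huberDeriv_le (ε t : ℝ) : |huberDeriv ε t| ≤ 1 :=
  abs_le.2 ⟨le_max_left _ _, max_le (by norm_num) (min_le_left _ _)⟩

theorem mul_sub_le_huber (hε : 0 < ε) {s : ℝ} (hs : |s| ≤ 1) (z : ℝ) :
    s * z - ε * s ^ 2 / 2 ≤ huber ε z := by
  have hsz : s * z ≤ |s| * |z| := (le_abs_self _).trans (abs_mul s z).le
  unfold huber
  split_ifs with hz
  · have : 0 ≤ (1 - |s|) * (|z| - ε * (1 + |s|) / 2) :=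
      mul_nonneg (by linarith) (by nlinarith [abs_nonneg s])
    nlinarith [sq_abs s]
  · rw [le_div_iff₀ (by positivity)]
    nlinarith [sq_nonneg (z - ε * s)]

theorem huber_eq_huberDeriv (hε : 0 < ε) (t : ℝ) :
    huber ε t = huberDeriv ε t * t - ε * huberDeriv ε t ^ 2 / 2 := by
  rcases le_or_gt ε t with ht | ht
  · rw [huberDeriv_of_le hε ht, huber, if_pos (ht.trans (le_abs_self t)),
      abs_of_pos (hε.trans_le ht)]
    ring
  rcases le_or_gt t (-ε) with ht' | ht'
  · rw [huberDeriv_of_le_neg hε ht', huber, if_pos (by rw [abs_of_neg (by linarith)]; linarith),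
      abs_of_neg (by linarith)]
    ring
  · have habs : |t| < ε := abs_lt.2 ⟨ht', ht⟩
    rw [huberDeriv_of_abs_le hε habs.le, huber, if_neg (not_le.2 habs)]
    field_simp
    ring

theorem huber_add_huberDeriv_mul_le (hε : 0 < ε) (m z : ℝ) :
    huber ε m + huberDeriv ε m * (z - m) ≤ huber ε z := by
  have := mul_sub_le_huber hε (abs_huberDeriv_le ε m) z
  rw [huber_eq_huberDeriv hε m]
  linarith

theorem huberDeriv_huberProx {α : ℝ} (hα : 0 < α) (hε : 0 < ε) (x : ℝ) :
    huberDeriv ε (huberProx α ε x) = (x - huberProx α ε x) / α := by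
  unfold huberProx
  split_ifs with h₁ h₂
  · rw [huberDeriv_of_le_neg hε (by linarith)]
    field_simp
    ring
  · rw [huberDeriv_of_le hε (by linarith)]
    field_simp
    ring
  · have hαε : 0 < α + ε := by linarith
    have hx : |x| ≤ α + ε := abs_le.2 ⟨by linarith, by linarith⟩
    have : |ε * x / (α + ε)| ≤ ε := by
      rw [abs_div, abs_mul, abs_of_pos hε, abs_of_pos hαε, div_le_iff₀ hαε]
      exact mul_le_mul_of_nonneg_left hx hε.le
    rw [huberDeriv_of_abs_le hε this]
    field_simp
    ring

end Huber

end

theorem add_sq_div_growth_of_subgradient {φ : ℝ → ℝ} {α x m : ℝ} (hα : 0 < α)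
    (hsub : ∀ z, φ m + (x - m) / α * (z - m) ≤ φ z) (z : ℝ) :
    φ m + (m - x) ^ 2 / (2 * α) + 1 / (2 * α) * dist z m ^ 2 ≤ φ z + (z - x) ^ 2 / (2 * α) := by
  have hexp : (z - x) ^ 2 / (2 * α)
      = (m - x) ^ 2 / (2 * α) - (x - m) / α * (z - m) + 1 / (2 * α) * (z - m) ^ 2 := by
    field_simp
    ring
  rw [Real.dist_eq, sq_abs, hexp]
  linarith [hsub z]

theorem isUniqueMin_of_quadratic_growth {X : Type*} [MetricSpace X] {f : X → ℝ} {m : X} {c : ℝ}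
    (hc : 0 < c) (h : ∀ z, f m + c * dist z m ^ 2 ≤ f z) :
    (∀ z, f m ≤ f z) ∧ ∀ z, (∀ w, f z ≤ f w) → z = m := by
  refine ⟨fun z => le_trans (by nlinarith) (h z), fun z hz => ?_⟩
  have : c * dist z m ^ 2 ≤ 0 := by linarith [h z, hz m]
  by_contra hne
  nlinarith [mul_pos hc (pow_pos (dist_pos.2 hne) 2)]

open Huber in
/-- The proximal operator of the Huber function: for `α, ε > 0` and `x ∈ ℝ`, the map
`z ↦ h_ε(z) + (z − x)²/(2α)` has a unique minimizer, equal to `x + α` if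
`x ≤ −α − ε`, to `εx/(α + ε)` if `|x| ≤ α + ε`, and to `x − α` if `x ≥ α + ε`. -/
theorem prox_huber (α ε x : ℝ) (hα : 0 < α) (hε : 0 < ε)
    (hub : ℝ → ℝ)
    (hhub : ∀ t, hub t = if ε ≤ |t| then |t| - ε / 2 else t ^ 2 / (2 * ε))
    (f : ℝ → ℝ) (hf : ∀ z, f z = hub z + (z - x) ^ 2 / (2 * α))
    (m : ℝ)
    (hm : m = if x ≤ -(α + ε) then x + α
              else if α + ε ≤ x then x - α
              else ε * x / (α + ε)) :
    (∀ z, f m ≤ f z) ∧ ∀ z, (∀ w, f z ≤ f w) → z = m := by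
  have hub_eq : hub = huber ε := funext hhub
  change m = huberProx α ε x at hm
  subst hm
  refine isUniqueMin_of_quadratic_growth (f := f) (c := 1 / (2 * α)) (by positivity) fun z => ?_
  rw [hf, hf, hub_eq]
  refine add_sq_div_growth_of_subgradient hα (fun w => ?_) z
  rw [← huberDeriv_huberProx hα hε]
  exact huber_add_huberDeriv_mul_le hε _ w
end

section
/- Let l_s ≤ l_m be integers, V_l > 0 for l = l_s, …, l_m, and ε > 0. Among all families of positive reals (N_l)_{l=l_s}^{l_m} satisfying the variance constraint Σ_{l=l_s}^{l_m} V_l/N_l = ε, the total cost K = Σ_{l=l_s}^{l_m} N_l·2^l satisfies K ≥ ε⁻¹ (Σ_{l=l_s}^{l_m} √(V_l·2^l))², with equality exactly when N_l = ε⁻¹ √(V_l·2^{−l}) · Σ_{k=l_s}^{l_m} √(V_k·2^k) for every l; thus this choice of sample sizes minimizes the MLMC computational cost subject to the constraint. -/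
/-!
Write `σ l = √(V l 2^l)` and `g l = N l 2^l`. The variance constraint reads `∑ σ l ^ 2 / g l = ε`,
so the cost bound is Sedrakyan's form of Cauchy–Schwarz, `(∑ σ)² / ∑ g ≤ ∑ σ² / g`. Its defect
is the sum of squares `∑ (σ l - λ g l)² / g l` with `λ = ∑ σ / ∑ g`, so equality forces
`σ = λ g`, and at the optimum `λ = ε / ∑ σ`.
-/

open Finset

theorem Real.sqrt_mul_inv_mul_self (x : ℝ) {y : ℝ} (hy : 0 ≤ y) :
    √(x * y⁻¹) * y = √(x * y) := by
  rcases hy.eq_or_lt with rfl | hy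
  · simp
  rw [← Real.sqrt_sq hy.le, ← Real.sqrt_mul' _ (sq_nonneg y), Real.sqrt_sq hy.le]
  field_simp

namespace Finset

variable {ι : Type*} {s : Finset ι} {f g : ι → ℝ}

theorem sum_sq_div_sub_sq_sum_div_eq (hg : ∀ i ∈ s, 0 < g i) :
    ∑ i ∈ s, f i ^ 2 / g i - (∑ i ∈ s, f i) ^ 2 / ∑ i ∈ s, g i =
      ∑ i ∈ s, (f i - (∑ j ∈ s, f j) / (∑ j ∈ s, g j) * g i) ^ 2 / g i := by
  rcases s.eq_empty_or_nonempty with rfl | hs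
  · simp
  have hG : (∑ i ∈ s, g i) ≠ 0 := (sum_pos hg hs).ne'
  have hexpand : ∀ i ∈ s, (f i - (∑ j ∈ s, f j) / (∑ j ∈ s, g j) * g i) ^ 2 / g i =
      f i ^ 2 / g i - 2 * ((∑ j ∈ s, f j) / ∑ j ∈ s, g j) * f i
        + ((∑ j ∈ s, f j) / ∑ j ∈ s, g j) ^ 2 * g i := by
    intro i hi
    field_simp [(hg i hi).ne']
    ring
  rw [sum_congr rfl hexpand, sum_add_distrib, sum_sub_distrib, ← mul_sum, ← mul_sum]
  field_simp
  ring

theorem sum_sq_div_eq_sq_sum_div_iff (hg : ∀ i ∈ s, 0 < g i) :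
    ∑ i ∈ s, f i ^ 2 / g i = (∑ i ∈ s, f i) ^ 2 / ∑ i ∈ s, g i ↔
      ∀ i ∈ s, f i = (∑ j ∈ s, f j) / (∑ j ∈ s, g j) * g i := by
  rw [← sub_eq_zero, sum_sq_div_sub_sq_sum_div_eq hg,
    sum_eq_zero_iff_of_nonneg fun i hi => div_nonneg (sq_nonneg _) (hg i hi).le]
  refine forall₂_congr fun i hi => ?_
  rw [div_eq_zero_iff, or_iff_left (hg i hi).ne', sq_eq_zero_iff, sub_eq_zero]

end Finset

/-- Optimal MLMC sample sizes: among positive `(N_l)` with `Σ V_l/N_l = ε`, the cost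
`Σ N_l 2^l` is at least `ε⁻¹ (Σ √(V_l 2^l))²`, with equality exactly for
`N_l = ε⁻¹ √(V_l 2^{−l}) Σ_k √(V_k 2^k)`. -/
theorem mlmc_optimal_sample_sizes (ls lm : ℤ) (hle : ls ≤ lm)
    (V : ℤ → ℝ) (hV : ∀ l ∈ Finset.Icc ls lm, 0 < V l)
    (ε : ℝ) (hε : 0 < ε)
    (N : ℤ → ℝ) (hN : ∀ l ∈ Finset.Icc ls lm, 0 < N l)
    (hconstraint : ∑ l ∈ Finset.Icc ls lm, V l / N l = ε) :
    ε⁻¹ * (∑ l ∈ Finset.Icc ls lm, Real.sqrt (V l * (2 : ℝ) ^ l)) ^ 2 ≤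
      (∑ l ∈ Finset.Icc ls lm, N l * (2 : ℝ) ^ l) ∧
    ((∑ l ∈ Finset.Icc ls lm, N l * (2 : ℝ) ^ l) =
        ε⁻¹ * (∑ l ∈ Finset.Icc ls lm, Real.sqrt (V l * (2 : ℝ) ^ l)) ^ 2 ↔
      ∀ l ∈ Finset.Icc ls lm,
        N l = ε⁻¹ * Real.sqrt (V l * (2 : ℝ) ^ (-l)) *
          ∑ k ∈ Finset.Icc ls lm, Real.sqrt (V k * (2 : ℝ) ^ k)) := by
  set s := Icc ls lm
  set S := ∑ l ∈ s, √(V l * (2 : ℝ) ^ l)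
  set K := ∑ l ∈ s, N l * (2 : ℝ) ^ l
  have h2 : ∀ l : ℤ, (0 : ℝ) < 2 ^ l := zpow_pos two_pos
  have hs : s.Nonempty := nonempty_Icc.2 hle
  have hcost : ∀ l ∈ s, 0 < N l * (2 : ℝ) ^ l := fun l hl => mul_pos (hN l hl) (h2 l)
  have hK : 0 < K := sum_pos hcost hs
  have hS : 0 < S := sum_pos (fun l hl => Real.sqrt_pos.2 (mul_pos (hV l hl) (h2 l))) hs
  have hvariance : ∑ l ∈ s, √(V l * (2 : ℝ) ^ l) ^ 2 / (N l * 2 ^ l) = ε := by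
    rw [← hconstraint]
    refine sum_congr rfl fun l hl => ?_
    rw [Real.sq_sqrt (mul_pos (hV l hl) (h2 l)).le]
    field_simp
  have hsqrt : ∀ l : ℤ, √(V l * (2 : ℝ) ^ (-l)) = √(V l * 2 ^ l) / 2 ^ l := fun l => by
    rw [eq_div_iff (h2 l).ne', zpow_neg, Real.sqrt_mul_inv_mul_self _ (h2 l).le]
  refine ⟨?_, fun hopt l hl => ?_, fun hopt => ?_⟩
  · have hsedrakyan := sq_sum_div_le_sum_sq_div s (fun l => √(V l * (2 : ℝ) ^ l)) hcost
    rw [hvariance, div_le_iff₀ hK] at hsedrakyan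
    rw [inv_mul_le_iff₀ hε]
    linarith
  · have hprop : √(V l * (2 : ℝ) ^ l) = S / K * (N l * 2 ^ l) :=
      (sum_sq_div_eq_sq_sum_div_iff hcost).1
        (by rw [hvariance]; change ε = S ^ 2 / K; rw [hopt]; field_simp) l hl
    rw [hsqrt, hprop, hopt]
    field_simp
  · calc K = ∑ l ∈ s, ε⁻¹ * S * √(V l * (2 : ℝ) ^ l) :=
          sum_congr rfl fun l hl => by rw [hopt l hl, hsqrt]; field_simp
      _ = ε⁻¹ * S ^ 2 := by rw [← mul_sum]; ring
end
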